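/- Let F(z) = ₚF_q(α₁,…,αₚ; γ₁,…,γ_q; z). Then for every natural number n, ₚF_q(α₁+n, α₂,…,αₚ; γ₁,…,γ_q; z) = Σ_{k=0}^n [C(n,k)/(α₁)_k] · z^k F^{(k)}(z), where C(n,k) is the binomial coefficient and (α₁)_k the Pochhammer symbol. -/

import Mathlib

/-- Pochhammer symbol `(x)_k` (rising factorial). -/
noncomputable def ascp (x : ℂ) (k : ℕ) : ℂ := (ascPochhammer ℂ k).eval x

/-- The generalized hypergeometric function `ₚF_q(a; b; z)` as a formal power series:
its `k`-th coefficient is `(a₁)_k ⋯ (aₚ)_k / ((b₁)_k ⋯ (b_q)_k k!)`. -/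
noncomputable def pFq (a b : List ℂ) : PowerSeries ℂ :=
  PowerSeries.mk fun k =>
    (a.map fun x => ascp x k).prod / ((b.map fun x => ascp x k).prod * (Nat.factorial k : ℂ))

/-
Write `θ = z d/dz`. Comparing coefficients gives the contiguous relation `(a + θ) F(a) = a F(a + 1)`
for `F(a) = ₚF_q(a, α₂, …; γ; z)`, and Leibniz gives `θ (zᵏ F⁽ᵏ⁾) = k zᵏ F⁽ᵏ⁾ + zᵏ⁺¹ F⁽ᵏ⁺¹⁾`.
Applying `α + n + θ` to the formula for `n` therefore yields the formula for `n + 1`, provided the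
coefficients `c(n, k) = C(n, k) / (α)_k` satisfy
`(α + n) c(n+1, k+1) = (α + n + k + 1) c(n, k+1) + c(n, k)`;
clearing `(α)_{k+1} = (α)_k (α + k)` this is Pascal's rule combined with
`(n + 1) C(n, k) = (k + 1) C(n+1, k+1)`.
-/

open PowerSeries Finset

section EulerOperator

variable {R : Type*} [CommSemiring R]

theorem X_mul_derivative_X_pow (k : ℕ) : X * d⁄dX R (X ^ k) = (k : R) • X ^ k := by
  rcases k with _ | k
  · simp
  · rw [derivative_pow, derivative_X, smul_eq_C_mul, map_natCast]
    push_cast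
    ring

theorem X_mul_derivative_X_pow_mul (k : ℕ) (f : R⟦X⟧) :
    X * d⁄dX R (X ^ k * f) = (k : R) • (X ^ k * f) + X ^ (k + 1) * d⁄dX R f := by
  rw [Derivation.leibniz, smul_eq_mul, smul_eq_mul, mul_add, ← mul_assoc X f, mul_comm X f,
    mul_assoc f, X_mul_derivative_X_pow, smul_eq_C_mul, smul_eq_C_mul]
  ring

end EulerOperator

theorem sum_range_add_shift_eq {M : Type*} [AddCommMonoid M] (u v w : ℕ → M) (n : ℕ)
    (h0 : w 0 = u 0) (hs : ∀ k, w (k + 1) = u (k + 1) + v k) (hu : u (n + 1) = 0) :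
    ∑ k ∈ range (n + 1), (u k + v k) = ∑ k ∈ range (n + 2), w k := by
  have hu' : ∑ k ∈ range (n + 1), u k = ∑ k ∈ range (n + 1), u (k + 1) + u 0 := by
    rw [← sum_range_succ', sum_range_succ u (n + 1), hu, add_zero]
  rw [sum_range_succ' w, h0, sum_congr rfl fun k _ => hs k, sum_add_distrib, sum_add_distrib, hu',
    add_right_comm]

theorem ascp_succ_right (x : ℂ) (k : ℕ) : ascp x (k + 1) = ascp x k * (x + k) :=
  ascPochhammer_succ_eval k x

theorem ascp_succ_left (x : ℂ) (k : ℕ) : ascp x (k + 1) = x * ascp (x + 1) k := by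
  simp [ascp, ascPochhammer_succ_left, Polynomial.eval_comp]

theorem ascp_ne_zero {x : ℂ} (hx : ∀ m : ℕ, x ≠ -m) (k : ℕ) : ascp x k ≠ 0 := by
  simp only [ascp, ne_eq, ascPochhammer_eval_eq_zero_iff, not_exists, not_and]
  intro m _ hm
  exact hx m (by rw [hm, neg_neg])

theorem coeff_pFq_cons (a : ℂ) (αs γs : List ℂ) (m : ℕ) :
    coeff m (pFq (a :: αs) γs) = ascp a m * coeff m (pFq αs γs) := by
  simp [pFq, mul_div_assoc]

theorem smul_pFq_cons_add_one (a : ℂ) (αs γs : List ℂ) :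
    a • pFq ((a + 1) :: αs) γs = a • pFq (a :: αs) γs + X * d⁄dX ℂ (pFq (a :: αs) γs) := by
  ext (_ | m)
  · simp only [map_add, coeff_smul, coeff_zero_X_mul, coeff_pFq_cons, ascp, ascPochhammer_zero,
      Polynomial.eval_one, add_zero]
  · have h : a * ascp (a + 1) (m + 1) = ascp a (m + 1) * (a + (m + 1)) := by
      rw [← ascp_succ_left, ascp_succ_right]; push_cast; ring
    simp only [map_add, coeff_smul, coeff_succ_X_mul, coeff_derivative, coeff_pFq_cons,
      smul_eq_mul]
    linear_combination coeff (m + 1) (pFq αs γs) * h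

theorem add_nat_mul_succ_choose_div_ascp {α : ℂ} (hα : ∀ m : ℕ, α ≠ -m) (n k : ℕ) :
    (α + n) * ((n + 1).choose (k + 1) / ascp α (k + 1))
      = (α + n + (k + 1)) * (n.choose (k + 1) / ascp α (k + 1)) + n.choose k / ascp α k := by
  have pascal : ((n + 1).choose (k + 1) : ℂ) = n.choose k + n.choose (k + 1) := by
    exact_mod_cast Nat.choose_succ_succ n k
  have absorb : ((n : ℂ) + 1) * n.choose k = (n + 1).choose (k + 1) * (k + 1) := by
    exact_mod_cast Nat.add_one_mul_choose_eq n k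
  have hk : α + k ≠ 0 := fun h => hα k (eq_neg_of_add_eq_zero_left h)
  rw [ascp_succ_right]
  field_simp [ascp_ne_zero hα k]
  linear_combination (α + n + k + 1) * pascal + absorb

theorem pFq_cons_add_nat {α : ℂ} (hα : ∀ m : ℕ, α ≠ -m) (αs γs : List ℂ) (n : ℕ) :
    pFq ((α + n) :: αs) γs = ∑ k ∈ range (n + 1),
      (n.choose k / ascp α k : ℂ) • (X ^ k * (d⁄dX ℂ)^[k] (pFq (α :: αs) γs)) := by
  set T : ℕ → ℂ⟦X⟧ := fun k => X ^ k * (d⁄dX ℂ)^[k] (pFq (α :: αs) γs)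
  set c : ℕ → ℕ → ℂ := fun n k => n.choose k / ascp α k
  induction n with
  | zero => simp [ascp]
  | succ n ih =>
    have hβ : α + n ≠ 0 := fun h => hα n (eq_neg_of_add_eq_zero_left h)
    set β := α + n
    have euler (k : ℕ) : X * d⁄dX ℂ (T k) = (k : ℂ) • T k + T (k + 1) := by
      simp only [T, X_mul_derivative_X_pow_mul, Function.iterate_succ_apply']
    refine smul_right_injective ℂ⟦X⟧ hβ ?_
    calc β • pFq ((α + ↑(n + 1)) :: αs) γs
        = β • pFq ((β + 1) :: αs) γs := by rw [Nat.cast_succ, ← add_assoc]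
      _ = β • pFq (β :: αs) γs + X * d⁄dX ℂ (pFq (β :: αs) γs) := smul_pFq_cons_add_one ..
      _ = ∑ k ∈ range (n + 1), (((β + k) * c n k) • T k + c n k • T (k + 1)) := by
        rw [ih, smul_sum, map_sum, mul_sum, ← sum_add_distrib]
        refine sum_congr rfl fun k _ => ?_
        rw [Derivation.map_smul, mul_smul_comm, euler]
        module
      _ = ∑ k ∈ range (n + 2), (β * c (n + 1) k) • T k := by
        refine sum_range_add_shift_eq _ _ _ _ (by simp [c]) (fun k => ?_) (by simp [c])
        rw [← add_smul, add_nat_mul_succ_choose_div_ascp hα]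
        push_cast
        rfl
      _ = β • ∑ k ∈ range (n + 2), c (n + 1) k • T k := by
        simp only [smul_sum, smul_smul]

theorem pFq_shift_as_derivatives_general (α₁ : ℂ) (αs γs : List ℂ)
    (hα : ∀ m : ℕ, α₁ ≠ -(m : ℂ)) (n : ℕ) :
    pFq ((α₁ + n) :: αs) γs
      = ∑ k ∈ Finset.range (n + 1),
          PowerSeries.C ((n.choose k : ℂ) / ascp α₁ k) * PowerSeries.X ^ k
            * (PowerSeries.derivativeFun)^[k] (pFq (α₁ :: αs) γs) := by
  have hD : (derivativeFun : ℂ⟦X⟧ → ℂ⟦X⟧) = d⁄dX ℂ := rfl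
  simp only [hD, ← smul_eq_C_mul, smul_mul_assoc]
  exact pFq_cons_add_nat hα αs γs n

/-- `ₚF_q(α₁+n, α₂,…; γ; z) = Σ_{k=0}^n C(n,k)/(α₁)_k · z^k F⁽ᵏ⁾(z)`. -/
theorem pFq_shift_as_derivatives (α₁ : ℂ) (αs γs : List ℂ)
    (hα : ∀ m : ℕ, α₁ ≠ -(m : ℂ)) (hγ : ∀ γ ∈ γs, ∀ m : ℕ, γ ≠ -(m : ℂ)) (n : ℕ) :
    pFq ((α₁ + n) :: αs) γs
      = ∑ k ∈ Finset.range (n + 1),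
          PowerSeries.C ((n.choose k : ℂ) / ascp α₁ k) * PowerSeries.X ^ k
            * (PowerSeries.derivativeFun)^[k] (pFq (α₁ :: αs) γs) :=
  pFq_shift_as_derivatives_general α₁ αs γs hα n
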